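/- Let (X, d) be a geodesic metric space, (Z, d_Z) a metric space, k ∈ ℕ, and suppose Φ : X → ℝ^k × Z is an isometry onto its image (with a product metric on ℝ^k × Z) whose image is open in ℝ^k × Z. Write Φ = (u, f). If the Hausdorff dimension of X is at most k, then f is constant on each geodesic-connected subset of X; in particular if X is geodesic then f is constant. -/

import Mathlib

open Metric MeasureTheory Set Module
open scoped ENNReal

/-!
If `f` changed along a short continuum `C` inside a ball of `X` whose image under `Φ` is
surrounded by a ball contained in `range Φ`, then `range Φ` would contain `B × f(C)` with `B` a
ball of `ℝ^k`. Composing with the `1`-Lipschitz map `(x, z) ↦ (x, d(z₀, z))` turns `f(C)` into a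
nondegenerate interval, so `range Φ ≅ X` would have Hausdorff dimension at least `k + 1`. Hence
`f` is locally constant, and constant along every geodesic.
-/

section ProductDimension

variable {E Z : Type*} [NormedAddCommGroup E] [NormedSpace ℝ E] [FiniteDimensional ℝ E]
  [MetricSpace Z]

theorem dimH_ball_prod_Icc {x : E} {ε r : ℝ} (hε : 0 < ε) (hr : 0 < r) :
    dimH (ball x ε ×ˢ Icc 0 r) = (finrank ℝ E + 1 : ℕ) := by
  have hnhds : ball x ε ×ˢ Icc 0 r ∈ nhds (x, r / 2) :=
    prod_mem_nhds (ball_mem_nhds x hε) (Icc_mem_nhds (half_pos hr) (half_lt_self hr))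
  rw [Real.dimH_of_mem_nhds hnhds, finrank_prod, finrank_self]

theorem finrank_add_one_le_dimH_of_ball_prod_subset {U : Set (E × Z)} {x₀ : E} {ε : ℝ}
    (hε : 0 < ε) {T : Set Z} (hT : IsPreconnected T) {z₀ z₁ : Z} (h₀ : z₀ ∈ T) (h₁ : z₁ ∈ T)
    (hne : z₀ ≠ z₁) (hU : ball x₀ ε ×ˢ T ⊆ U) :
    ((finrank ℝ E + 1 : ℕ) : ℝ≥0∞) ≤ dimH U := by
  set g : E × Z → E × ℝ := fun p => (p.1, dist z₀ p.2)
  have hg : LipschitzWith 1 g := by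
    simpa using LipschitzWith.prod_fst.prodMk ((LipschitzWith.dist_right z₀).comp
      (LipschitzWith.prod_snd (α := E) (β := Z)))
  have hIVT : Icc 0 (dist z₀ z₁) ⊆ dist z₀ '' T := by
    simpa using hT.intermediate_value h₀ h₁ (f := dist z₀)
      (continuous_const.dist continuous_id).continuousOn
  have hsub : ball x₀ ε ×ˢ Icc 0 (dist z₀ z₁) ⊆ g '' U := by
    rintro ⟨x, ρ⟩ ⟨hx, hρ⟩
    obtain ⟨z, hz, rfl⟩ := hIVT hρ
    exact ⟨(x, z), hU ⟨hx, hz⟩, rfl⟩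
  calc ((finrank ℝ E + 1 : ℕ) : ℝ≥0∞)
      = dimH (ball x₀ ε ×ˢ Icc 0 (dist z₀ z₁)) := (dimH_ball_prod_Icc hε (dist_pos.2 hne)).symm
    _ ≤ dimH (g '' U) := dimH_mono hsub
    _ ≤ dimH U := hg.dimH_image_le U

end ProductDimension

section Geodesic

variable {X : Type*} [MetricSpace X]

def IsGeodesicSegment (γ : ℝ → X) (a b : X) : Prop :=
  γ 0 = a ∧ γ (dist a b) = b ∧
    ∀ s ∈ Icc (0 : ℝ) (dist a b), ∀ t ∈ Icc (0 : ℝ) (dist a b), dist (γ s) (γ t) = |s - t|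

namespace IsGeodesicSegment

variable {γ : ℝ → X} {a b : X}

theorem left_mem_image (h : IsGeodesicSegment γ a b) : a ∈ γ '' Icc 0 (dist a b) :=
  ⟨0, left_mem_Icc.2 dist_nonneg, h.1⟩

theorem right_mem_image (h : IsGeodesicSegment γ a b) : b ∈ γ '' Icc 0 (dist a b) :=
  ⟨dist a b, right_mem_Icc.2 dist_nonneg, h.2.1⟩

theorem isPreconnected_image (h : IsGeodesicSegment γ a b) :
    IsPreconnected (γ '' Icc 0 (dist a b)) := by
  refine isPreconnected_Icc.image γ (LipschitzOnWith.continuousOn (K := 1) ?_)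
  refine LipschitzOnWith.of_dist_le_mul fun s hs t ht => ?_
  rw [h.2.2 s hs t ht, Real.dist_eq, NNReal.coe_one, one_mul]

theorem image_subset_closedBall (h : IsGeodesicSegment γ a b) :
    γ '' Icc 0 (dist a b) ⊆ closedBall a (dist a b) := by
  rintro _ ⟨s, hs, rfl⟩
  have hdist := h.2.2 s hs 0 (left_mem_Icc.2 dist_nonneg)
  rw [h.1, sub_zero, abs_of_nonneg hs.1] at hdist
  exact mem_closedBall.2 (hdist.trans_le hs.2)

end IsGeodesicSegment

end Geodesic

section IsometricEmbedding

variable {X E Z : Type*} [MetricSpace X] [NormedAddCommGroup E] [NormedSpace ℝ E]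
  [FiniteDimensional ℝ E] [MetricSpace Z] {Φ : X → E × Z}

theorem Isometry.snd_eq_of_isPreconnected (hΦ : Isometry Φ)
    (hdim : dimH (univ : Set X) ≤ finrank ℝ E) {c : X} {ε : ℝ}
    (hball : ball (Φ c) ε ⊆ range Φ) {C : Set X} (hC : IsPreconnected C) (hCc : C ⊆ ball c ε)
    (hc : c ∈ C) {y : X} (hy : y ∈ C) : (Φ c).2 = (Φ y).2 := by
  by_contra hne
  have hε : 0 < ε := pos_of_mem_ball (hCc hc)
  have hT : IsPreconnected ((fun x => (Φ x).2) '' C) :=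
    hC.image _ (continuous_snd.comp hΦ.continuous).continuousOn
  have hU : ball (Φ c).1 ε ×ˢ ((fun x => (Φ x).2) '' C) ⊆ range Φ := by
    rintro ⟨x, _⟩ ⟨hx, w, hw, rfl⟩
    refine hball (mem_ball.2 (max_lt hx ?_))
    calc dist (Φ w).2 (Φ c).2 ≤ dist (Φ w) (Φ c) := by rw [Prod.dist_eq]; exact le_max_right _ _
      _ = dist w c := hΦ.dist_eq w c
      _ < ε := hCc hw
  have hle := finrank_add_one_le_dimH_of_ball_prod_subset hε hT (mem_image_of_mem _ hc)
    (mem_image_of_mem _ hy) hne hU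
  rw [← image_univ, hΦ.dimH_image] at hle
  exact absurd (Nat.cast_le.1 (hle.trans hdim)) (Nat.not_succ_le_self _)

theorem Isometry.isLocallyConstant_snd
    (hgeo : ∀ a b : X, ∃ γ : ℝ → X, IsGeodesicSegment γ a b) (hΦ : Isometry Φ)
    (hopen : IsOpen (range Φ)) (hdim : dimH (univ : Set X) ≤ finrank ℝ E) :
    IsLocallyConstant fun x => (Φ x).2 := by
  refine (IsLocallyConstant.iff_eventually_eq _).2 fun c => ?_
  obtain ⟨ε, hε, hball⟩ := Metric.isOpen_iff.1 hopen (Φ c) (mem_range_self c)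
  filter_upwards [ball_mem_nhds c hε] with y hy
  obtain ⟨γ, hγ⟩ := hgeo c y
  refine (hΦ.snd_eq_of_isPreconnected hdim hball hγ.isPreconnected_image ?_
    hγ.left_mem_image hγ.right_mem_image).symm
  exact hγ.image_subset_closedBall.trans (closedBall_subset_ball (mem_ball'.1 hy))

end IsometricEmbedding

theorem z_component_constant_general {X Z : Type*} [MetricSpace X] [MetricSpace Z]
    (hgeo : ∀ a b : X, ∃ γ : ℝ → X, γ 0 = a ∧ γ (dist a b) = b ∧
      ∀ s ∈ Set.Icc (0 : ℝ) (dist a b), ∀ t ∈ Set.Icc (0 : ℝ) (dist a b),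
        dist (γ s) (γ t) = |s - t|)
    (k : ℕ) (Φ : X → EuclideanSpace ℝ (Fin k) × Z)
    (hΦ : Isometry Φ) (hopen : IsOpen (Set.range Φ))
    (hdim : dimH (Set.univ : Set X) ≤ k) :
    ∀ a b : X, (Φ a).2 = (Φ b).2 := by
  rw [← finrank_euclideanSpace_fin (𝕜 := ℝ) (n := k)] at hdim
  have hf := hΦ.isLocallyConstant_snd hgeo hopen hdim
  intro a b
  obtain ⟨γ, hγ⟩ := hgeo a b
  exact hf.apply_eq_of_isPreconnected (IsGeodesicSegment.isPreconnected_image hγ)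
    (IsGeodesicSegment.left_mem_image hγ) (IsGeodesicSegment.right_mem_image hγ)

/-- Let `Φ = (u, f) : X → ℝ^k × Z` be an isometry onto its image (with the product metric),
with open image. If `X` is geodesic and has Hausdorff dimension at most `k`, then the
`Z`-component `f` is constant. -/
theorem z_component_constant {X Z : Type*} [MetricSpace X] [MetricSpace Z]
    [MeasurableSpace X] [BorelSpace X]
    (hgeo : ∀ a b : X, ∃ γ : ℝ → X, γ 0 = a ∧ γ (dist a b) = b ∧
      ∀ s ∈ Set.Icc (0 : ℝ) (dist a b), ∀ t ∈ Set.Icc (0 : ℝ) (dist a b),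
        dist (γ s) (γ t) = |s - t|)
    (k : ℕ) (Φ : X → EuclideanSpace ℝ (Fin k) × Z)
    (hΦ : Isometry Φ) (hopen : IsOpen (Set.range Φ))
    (hdim : dimH (Set.univ : Set X) ≤ k) :
    ∀ a b : X, (Φ a).2 = (Φ b).2 :=
  z_component_constant_general hgeo k Φ hΦ hopen hdim
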